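/- For every N ≥ 2 and every causal N-partite correlation P with binary inputs x_k ∈ {0,1} and binary outputs a_k ∈ {0,1} for each party, the generalized causal inequality J_2(N) ≥ 0 holds, where J_2(N) = Σ_{k=1}^N P_k(1 | x_k = 1, x_{∖k} = (0,…,0)) − P(1,…,1 | 1,…,1), with P_k(a_k|x) := Σ_{a_{∖k}} P(a|x) denoting the marginal distribution of the output of party k. -/

import Mathlib

/-- A correlation for the parties in the finite set `S`, where party `i` has input set `X i`
and output set `A i`: a real number `P x a` for each assignment of inputs `x` and outputs `a`
for the parties in `S`. -/
def Corr {ι : Type} (X A : ι → Type) (S : Finset ι) : Type :=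
  ((i : {j // j ∈ S}) → X i.1) → ((i : {j // j ∈ S}) → A i.1) → ℝ

/-- `p` is a probability distribution on the finite type `α`. -/
def IsProbDist {α : Type} [Fintype α] (p : α → ℝ) : Prop :=
  (∀ a, 0 ≤ p a) ∧ ∑ a, p a = 1

/-- Restriction of a tuple indexed by `S` to a subset `T ⊆ S`. -/
def restr {ι : Type} {X : ι → Type} {S T : Finset ι} (h : T ⊆ S)
    (x : (i : {j // j ∈ S}) → X i.1) : (i : {j // j ∈ T}) → X i.1 :=
  fun i => x ⟨i.1, h i.2⟩

theorem erase_sub {ι : Type} [DecidableEq ι] (S : Finset ι) (k : ι) : S.erase k ⊆ S :=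
  fun _ hi => Finset.mem_of_mem_erase hi

theorem sdiff_sub {ι : Type} [DecidableEq ι] (S K : Finset ι) : S \ K ⊆ S :=
  fun _ hi => (Finset.mem_sdiff.mp hi).1

/-- Combine a tuple on `K` and a tuple on `S \ K` into a tuple on `S`. -/
def glue {ι : Type} [DecidableEq ι] {X : ι → Type} {S K : Finset ι} (_ : K ⊆ S)
    (u : (i : {j // j ∈ K}) → X i.1) (v : (i : {j // j ∈ S \ K}) → X i.1) :
    (i : {j // j ∈ S}) → X i.1 :=
  fun i => if h : i.1 ∈ K then u ⟨i.1, h⟩ else v ⟨i.1, Finset.mem_sdiff.mpr ⟨i.2, h⟩⟩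

/-- Insert a value for party `k` into a tuple on `S.erase k`, giving a tuple on `S`. -/
def ins {ι : Type} [DecidableEq ι] {X : ι → Type} {S : Finset ι} {k : ι} (_ : k ∈ S)
    (xk : X k) (u : (i : {j // j ∈ S.erase k}) → X i.1) : (i : {j // j ∈ S}) → X i.1 :=
  fun i => if h : i.1 = k then cast (congrArg X h.symm) xk
    else u ⟨i.1, Finset.mem_erase.mpr ⟨h, i.2⟩⟩

/-- Causal correlations, defined by induction on the number of parties: any single-party
probability distribution is causal; a correlation on a set `S` of at least two parties is
causal iff it is a convex combination, over choices of a party `k ∈ S` acting first, of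
products of a single-party distribution for `k` with causal correlations for the remaining
parties `S.erase k` that may depend on the input and output of party `k`. -/
inductive IsCausal {ι : Type} [DecidableEq ι] (X A : ι → Type) [∀ i, Fintype (A i)] :
    (S : Finset ι) → Corr X A S → Prop
  | base (k : ι) (P : Corr X A {k}) (hP : ∀ x, IsProbDist (P x)) : IsCausal X A {k} P
  | step (S : Finset ι) (hS : 2 ≤ S.card) (P : Corr X A S)
      (q : {j // j ∈ S} → ℝ)
      (Pfirst : (k : {j // j ∈ S}) → X k.1 → A k.1 → ℝ)
      (Prest : (k : {j // j ∈ S}) → X k.1 → A k.1 → Corr X A (S.erase k.1))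
      (hq : ∀ k, 0 ≤ q k)
      (hq1 : ∑ k ∈ S.attach, q k = 1)
      (hPfirst : ∀ k xk, IsProbDist (Pfirst k xk))
      (hPrest : ∀ k xk ak, IsCausal X A (S.erase k.1) (Prest k xk ak))
      (hP : ∀ x a, P x a = ∑ k ∈ S.attach, q k * Pfirst k (x k) (a k) *
            Prest k (x k) (a k) (restr (erase_sub S k.1) x) (restr (erase_sub S k.1) a)) :
      IsCausal X A S P

/-! In a causal decomposition the party `k` acting first in a branch of weight `q_k` emits its
output with distribution `P_k^first(·|x_k)`, whatever the other inputs are. Hence that branch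
contributes at least `q_k P_k^first(a_k|x_k)` to the marginal `P_k(a_k|y)` for every `y` with
`y_k = x_k`, and at most the same amount to the joint `P(a|x)`, since the remaining parties'
correlation is a probability distribution. Summing over `k` gives
`P(1…1|1…1) ≤ Σ_k q_k P_k^first(1|1) ≤ Σ_k P_k(1 | x_k = 1, x_{∖k} = 0…0)`. -/

section Tuples

variable {ι : Type} [DecidableEq ι] {A : ι → Type} {S : Finset ι}

theorem ins_apply_self (k : {j // j ∈ S}) (b : A k.1)
    (u : (i : {j // j ∈ S.erase k.1}) → A i.1) :
    ins k.2 b u k = b := by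
  simp [ins]

theorem restr_ins {k : ι} (hk : k ∈ S) (b : A k) (u : (i : {j // j ∈ S.erase k}) → A i.1) :
    restr (erase_sub S k) (ins hk b u) = u := by
  funext ⟨i, hi⟩
  simp [restr, ins, (Finset.mem_erase.mp hi).1]

theorem ins_restr {k : ι} (hk : k ∈ S) (a : (i : {j // j ∈ S}) → A i.1) :
    ins hk (a ⟨k, hk⟩) (restr (erase_sub S k) a) = a := by
  funext ⟨i, hi⟩
  by_cases h : i = k
  · subst h
    simp [ins]
  · simp [ins, restr, h]

def splitAt (k : {j // j ∈ S}) :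
    ((i : {j // j ∈ S}) → A i.1) ≃ A k.1 × ((i : {j // j ∈ S.erase k.1}) → A i.1) where
  toFun a := (a k, restr (erase_sub S k.1) a)
  invFun p := ins k.2 p.1 p.2
  left_inv a := ins_restr k.2 a
  right_inv p := Prod.ext (ins_apply_self k p.1 p.2) (restr_ins k.2 p.1 p.2)

variable [∀ i, Fintype (A i)]

theorem sum_eq_sum_sum_restr (k : {j // j ∈ S})
    (g : A k.1 → ((i : {j // j ∈ S.erase k.1}) → A i.1) → ℝ) :
    ∑ a, g (a k) (restr (erase_sub S k.1) a) = ∑ b, ∑ u, g b u := by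
  rw [← Fintype.sum_prod_type']
  exact (splitAt k).sum_comp fun p => g p.1 p.2

theorem sum_ite_apply_eq_sum_restr [∀ i, DecidableEq (A i)] (k : {j // j ∈ S}) (b : A k.1)
    (g : A k.1 → ((i : {j // j ∈ S.erase k.1}) → A i.1) → ℝ) :
    ∑ a, (if a k = b then g (a k) (restr (erase_sub S k.1) a) else 0) = ∑ u, g b u := by
  rw [sum_eq_sum_sum_restr k fun c u => if c = b then g c u else 0]
  simp [Finset.sum_ite_irrel]

end Tuples

theorem IsProbDist.le_one {α : Type} [Fintype α] {p : α → ℝ} (hp : IsProbDist p) (a : α) :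
    p a ≤ 1 :=
  hp.2 ▸ Finset.single_le_sum (fun b _ => hp.1 b) (Finset.mem_univ a)

section Causal

variable {ι : Type} [DecidableEq ι] {X A : ι → Type} [∀ i, Fintype (A i)]

theorem IsCausal.isProbDist {S : Finset ι} {P : Corr X A S} (hP : IsCausal X A S P)
    (x : (i : {j // j ∈ S}) → X i.1) : IsProbDist (P x) := by
  induction hP with
  | base k P hP => exact hP x
  | step S _ P q F R hq hq1 hF _ hPeq ih =>
    refine ⟨fun a => ?_, ?_⟩
    · rw [hPeq]
      exact Finset.sum_nonneg fun k _ =>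
        mul_nonneg (mul_nonneg (hq k) ((hF k (x k)).1 _)) ((ih k _ _ _).1 _)
    · have hbranch : ∀ k, ∑ a, q k * F k (x k) (a k) *
          R k (x k) (a k) (restr (erase_sub S k.1) x) (restr (erase_sub S k.1) a) = q k := by
        intro k
        rw [sum_eq_sum_sum_restr k fun b u => q k * F k (x k) b * R k (x k) b _ u]
        simp_rw [← Finset.mul_sum, (ih k _ _ _).2, mul_one, ← Finset.mul_sum, (hF k (x k)).2,
          mul_one]
      simp_rw [hPeq x]
      rw [Finset.sum_comm]
      simp_rw [hbranch]
      exact hq1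

def marginal [∀ i, DecidableEq (A i)] {S : Finset ι} (P : Corr X A S) (k : {j // j ∈ S})
    (x : (i : {j // j ∈ S}) → X i.1) (b : A k.1) : ℝ :=
  ∑ a, if a k = b then P x a else 0

section Marginal

variable [∀ i, DecidableEq (A i)] {S : Finset ι} {P : Corr X A S}
  {x : (i : {j // j ∈ S}) → X i.1}

theorem marginal_nonneg (hP : ∀ a, 0 ≤ P x a) (k : {j // j ∈ S}) (b : A k.1) :
    0 ≤ marginal P k x b :=
  Finset.sum_nonneg fun a _ => ite_nonneg (hP a) le_rfl

theorem le_marginal (hP : ∀ a, 0 ≤ P x a) (k : {j // j ∈ S})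
    (a : (i : {j // j ∈ S}) → A i.1) :
    P x a ≤ marginal P k x (a k) :=
  calc P x a = if a k = a k then P x a else 0 := (if_pos rfl).symm
    _ ≤ marginal P k x (a k) :=
      Finset.single_le_sum (f := fun b => if b k = a k then P x b else 0)
        (fun b _ => ite_nonneg (hP b) le_rfl) (Finset.mem_univ a)

end Marginal

theorem IsCausal.le_sum_marginal [∀ i, DecidableEq (A i)] {S : Finset ι} {P : Corr X A S}
    (hP : IsCausal X A S P) (x : (i : {j // j ∈ S}) → X i.1)
    (a : (i : {j // j ∈ S}) → A i.1)
    (y : {j // j ∈ S} → (i : {j // j ∈ S}) → X i.1) (hy : ∀ k, y k k = x k) :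
    P x a ≤ ∑ k ∈ S.attach, marginal P k (y k) (a k) := by
  have hmarginal_nonneg : ∀ k ∈ S.attach, 0 ≤ marginal P k (y k) (a k) := fun k _ =>
    marginal_nonneg (hP.isProbDist _).1 k (a k)
  cases hP with
  | base k P hP =>
    let k₀ : {j // j ∈ ({k} : Finset ι)} := ⟨k, Finset.mem_singleton_self k⟩
    have hyx : y k₀ = x := by
      funext ⟨i, hi⟩
      obtain rfl := Finset.mem_singleton.mp hi
      exact hy _
    calc P x a ≤ marginal P k₀ (y k₀) (a k₀) := hyx ▸ le_marginal (hP x).1 k₀ a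
      _ ≤ _ := Finset.single_le_sum hmarginal_nonneg (Finset.mem_attach _ k₀)
  | step S _ P q F R hq _ hF hR hPeq =>
    have term_nonneg : ∀ x a k, 0 ≤ q k * F k (x k) (a k) *
        R k (x k) (a k) (restr (erase_sub S k.1) x) (restr (erase_sub S k.1) a) := fun x a k =>
      mul_nonneg (mul_nonneg (hq k) ((hF k (x k)).1 _)) (((hR k _ _).isProbDist _).1 _)
    have first_le_marginal : ∀ k b, q k * F k (y k k) b ≤ marginal P k (y k) b := by
      intro k b
      calc q k * F k (y k k) b
          = ∑ a, if a k = b then q k * F k (y k k) (a k) *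
              R k (y k k) (a k) (restr (erase_sub S k.1) (y k)) (restr (erase_sub S k.1) a)
            else 0 := by
            rw [sum_ite_apply_eq_sum_restr k b fun c u =>
              q k * F k (y k k) c * R k (y k k) c (restr (erase_sub S k.1) (y k)) u,
              ← Finset.mul_sum, ((hR k _ _).isProbDist _).2, mul_one]
        _ ≤ marginal P k (y k) b := by
            refine Finset.sum_le_sum fun a _ => ?_
            split_ifs
            · rw [hPeq]
              exact Finset.single_le_sum (fun j _ => term_nonneg (y k) a j)
                (Finset.mem_attach _ k)
            · rfl
    calc P x a = ∑ k ∈ S.attach, q k * F k (x k) (a k) *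
          R k (x k) (a k) (restr (erase_sub S k.1) x) (restr (erase_sub S k.1) a) := hPeq x a
      _ ≤ ∑ k ∈ S.attach, q k * F k (x k) (a k) := Finset.sum_le_sum fun k _ =>
          mul_le_of_le_one_right (mul_nonneg (hq k) ((hF k _).1 _))
            (((hR k _ _).isProbDist _).le_one _)
      _ ≤ _ := Finset.sum_le_sum fun k _ => hy k ▸ first_le_marginal k (a k)

end Causal

theorem causal_inequality_J2_general (N : ℕ)
    (P : Corr (fun _ : Fin N => Bool) (fun _ : Fin N => Bool) Finset.univ)
    (hP : IsCausal (fun _ : Fin N => Bool) (fun _ : Fin N => Bool) Finset.univ P) :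
    0 ≤ (∑ k : Fin N, ∑ a : (i : {j // j ∈ (Finset.univ : Finset (Fin N))}) → Bool,
        if a ⟨k, Finset.mem_univ k⟩ = true then
          P (fun i => if i.1 = k then true else false) a
        else 0)
      - P (fun _ => true) (fun _ => true) := by
  rw [sub_nonneg]
  calc P (fun _ => true) (fun _ => true)
      ≤ ∑ k ∈ Finset.univ.attach,
          marginal P k (fun i => if i.1 = k.1 then true else false) true :=
        hP.le_sum_marginal _ _ _ fun _ => if_pos rfl
    _ = _ := Finset.sum_attach Finset.univ fun k =>
        marginal P ⟨k, Finset.mem_univ k⟩ (fun i => if i.1 = k then true else false) true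

/-- every causal `N`-partite correlation with binary inputs and outputs
satisfies the generalized causal inequality `J_2(N) ≥ 0`, i.e.,
`Σ_k P_k(1 | x_k = 1, x_{∖k} = (0,…,0)) - P(1,…,1 | 1,…,1) ≥ 0`,
encoding `0` as `false` and `1` as `true`. -/
theorem causal_inequality_J2 (N : ℕ) (hN : 2 ≤ N)
    (P : Corr (fun _ : Fin N => Bool) (fun _ : Fin N => Bool) Finset.univ)
    (hP : IsCausal (fun _ : Fin N => Bool) (fun _ : Fin N => Bool) Finset.univ P) :
    0 ≤ (∑ k : Fin N, ∑ a : (i : {j // j ∈ (Finset.univ : Finset (Fin N))}) → Bool,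
        if a ⟨k, Finset.mem_univ k⟩ = true then
          P (fun i => if i.1 = k then true else false) a
        else 0)
      - P (fun _ => true) (fun _ => true) :=
  causal_inequality_J2_general N P hP
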